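/- arXiv:1408.0322 — 3 statements merged into one kernel-verified Lean document; each statement's English description precedes it below -/
import Mathlib

section
/- In BS(1,q), if v and w are words over {a,a⁻¹,t,t⁻¹} each with t-exponent sum zero, then vw and wv represent the same group element. -/
def bsRel (q : ℤ) : Set (FreeGroup Bool) :=
  {FreeGroup.of true * FreeGroup.of false * (FreeGroup.of true)⁻¹ *
    (FreeGroup.of false ^ q)⁻¹}

abbrev BS (q : ℤ) := PresentedGroup (bsRel q)

def bsA (q : ℤ) : BS q := PresentedGroup.of false

def bsT (q : ℤ) : BS q := PresentedGroup.of true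

def evalWord (q : ℤ) (w : List (Bool × Bool)) : BS q :=
  PresentedGroup.mk (bsRel q) (FreeGroup.mk w)

def tExp (w : List (Bool × Bool)) : ℤ :=
  (w.map (fun p => if p.1 then (if p.2 then (1 : ℤ) else -1) else 0)).sum

/-- The word `a^i` (as a list of letters over `{a,a⁻¹,t,t⁻¹}`). -/
def aWord (i : ℤ) : List (Bool × Bool) := List.replicate i.natAbs (false, 0 ≤ i)

/-- A word is geodesic if no shorter word represents the same element. -/
def IsGeodesic (q : ℤ) (w : List (Bool × Bool)) : Prop :=
  ∀ v : List (Bool × Bool), evalWord q v = evalWord q w → w.length ≤ v.length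

namespace BSaux
variable (q : ℤ)

lemma hrel : bsT q * bsA q * (bsT q)⁻¹ = (bsA q) ^ q := by
  have h : (PresentedGroup.mk (bsRel q))
      (FreeGroup.of true * FreeGroup.of false * (FreeGroup.of true)⁻¹ *
        (FreeGroup.of false ^ q)⁻¹) = 1 := by
    apply (QuotientGroup.eq_one_iff _).mpr
    exact Subgroup.subset_normalClosure rfl
  simp only [map_mul, map_inv, map_zpow] at h
  have := mul_eq_one_iff_eq_inv.mp h
  simpa [bsT, bsA, PresentedGroup.of] using this

/-- conjugates of `a` by powers of `t`. -/
def A (n : ℤ) : BS q := bsT q ^ n * bsA q * (bsT q ^ n)⁻¹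

lemma A_add (n c : ℤ) : A q (n + c) = bsT q ^ n * A q c * (bsT q ^ n)⁻¹ := by
  simp only [A, zpow_add]
  group

lemma A_nat (k : ℕ) : A q (k : ℤ) = bsA q ^ (q ^ k) := by
  induction k with
  | zero => simp [A]
  | succ k ih =>
    have hcast : ((k + 1 : ℕ) : ℤ) = (k : ℤ) + 1 := by push_cast; ring
    have h1 : A q ((k : ℤ) + 1) = bsT q * A q k * (bsT q)⁻¹ := by
      rw [add_comm, A_add, zpow_one]
    rw [hcast, h1, ih, ← conj_zpow, hrel, ← zpow_mul, pow_succ]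
    ring_nf

lemma commA (n m : ℤ) (h : n ≤ m) : Commute (A q n) (A q m) := by
  have hk : m = n + ((m - n).toNat : ℤ) := by omega
  have h3 : A q m = bsT q ^ n * (bsA q ^ (q ^ (m - n).toNat)) * (bsT q ^ n)⁻¹ := by
    nth_rewrite 1 [hk]
    rw [A_add, A_nat]
  have h2 : Commute (bsA q) (bsA q ^ (q ^ (m - n).toNat)) :=
    (Commute.refl (bsA q)).zpow_right _
  rw [Commute, SemiconjBy, h3, A]
  calc bsT q ^ n * bsA q * (bsT q ^ n)⁻¹ *
        (bsT q ^ n * bsA q ^ q ^ (m - n).toNat * (bsT q ^ n)⁻¹)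
      = bsT q ^ n * (bsA q * bsA q ^ q ^ (m - n).toNat) * (bsT q ^ n)⁻¹ := by group
    _ = bsT q ^ n * (bsA q ^ q ^ (m - n).toNat * bsA q) * (bsT q ^ n)⁻¹ := by rw [h2]
    _ = _ := by group

lemma commA' (n m : ℤ) : Commute (A q n) (A q m) := by
  rcases le_total n m with h | h
  · exact commA q n m h
  · exact (commA q m n h).symm

def S : Set (BS q) := Set.range (A q)

lemma comm_closure {x y : BS q} (hx : x ∈ Subgroup.closure (S q))
    (hy : y ∈ Subgroup.closure (S q)) : Commute x y := by
  induction hx using Subgroup.closure_induction with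
  | mem x hx =>
    induction hy using Subgroup.closure_induction with
    | mem y hy =>
      obtain ⟨n, rfl⟩ := hx; obtain ⟨m, rfl⟩ := hy; exact commA' q n m
    | one => exact Commute.one_right _
    | mul _ _ _ _ h1 h2 => exact h1.mul_right h2
    | inv _ _ h => exact h.inv_right
  | one => exact Commute.one_left _
  | mul _ _ _ _ h1 h2 => exact h1.mul_left h2
  | inv _ _ h => exact h.inv_left

lemma conj_mem {x : BS q} (e : ℤ) (hx : x ∈ Subgroup.closure (S q)) :
    bsT q ^ e * x * (bsT q ^ e)⁻¹ ∈ Subgroup.closure (S q) := by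
  induction hx using Subgroup.closure_induction with
  | mem x hx =>
    obtain ⟨n, rfl⟩ := hx
    apply Subgroup.subset_closure
    refine ⟨n + e, ?_⟩
    simp only [A, zpow_add]
    group
  | one => simpa using Subgroup.one_mem _
  | mul a b _ _ h1 h2 =>
    have : bsT q ^ e * (a * b) * (bsT q ^ e)⁻¹ =
        (bsT q ^ e * a * (bsT q ^ e)⁻¹) * (bsT q ^ e * b * (bsT q ^ e)⁻¹) := by group
    rw [this]; exact Subgroup.mul_mem _ h1 h2
  | inv a _ h =>
    have : bsT q ^ e * a⁻¹ * (bsT q ^ e)⁻¹ = (bsT q ^ e * a * (bsT q ^ e)⁻¹)⁻¹ := by group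
    rw [this]; exact Subgroup.inv_mem _ h

lemma eval_cons (x : Bool × Bool) (w : List (Bool × Bool)) :
    evalWord q (x :: w) =
      (if x.2 then PresentedGroup.of x.1 else (PresentedGroup.of x.1)⁻¹) * evalWord q w := by
  rcases x with ⟨b, s⟩
  cases s
  · have : FreeGroup.mk ((b, false) :: w) = (FreeGroup.of b)⁻¹ * FreeGroup.mk w := by
      have h1 : (FreeGroup.of b : FreeGroup Bool)⁻¹ = FreeGroup.mk [(b, false)] := by
        rw [show (FreeGroup.of b : FreeGroup Bool) = FreeGroup.mk [(b, true)] from rfl,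
          FreeGroup.inv_mk]
        rfl
      rw [h1, FreeGroup.mul_mk]
      rfl
    simp [evalWord, this, PresentedGroup.of]
  · have : FreeGroup.mk ((b, true) :: w) = FreeGroup.of b * FreeGroup.mk w := by
      rw [show (FreeGroup.of b : FreeGroup Bool) = FreeGroup.mk [(b, true)] from rfl,
        FreeGroup.mul_mk]
      rfl
    simp [evalWord, this, PresentedGroup.of]

lemma key (w : List (Bool × Bool)) :
    ∃ p ∈ Subgroup.closure (S q), evalWord q w = p * bsT q ^ tExp w := by
  induction w with
  | nil =>
    refine ⟨1, Subgroup.one_mem _, ?_⟩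
    simp [evalWord, tExp, ← FreeGroup.one_eq_mk]
  | cons x w ih =>
    obtain ⟨p, hp, hw⟩ := ih
    rcases x with ⟨b, s⟩
    have htexp : tExp ((b, s) :: w) = (if b then (if s then (1:ℤ) else -1) else 0) + tExp w := by
      simp [tExp]
    cases b
    · -- a^{±1}
      refine ⟨(if s then bsA q else (bsA q)⁻¹) * p, ?_, ?_⟩
      · apply Subgroup.mul_mem _ _ hp
        have h0 : bsA q ∈ Subgroup.closure (S q) := by
          apply Subgroup.subset_closure; exact ⟨0, by simp [A]⟩
        cases s <;> simp [h0, Subgroup.inv_mem _ h0]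
      · rw [eval_cons, hw, htexp]
        cases s <;> simp [bsA, mul_assoc]
    · -- t^{±1}
      set e : ℤ := if s then 1 else -1 with he
      refine ⟨bsT q ^ e * p * (bsT q ^ e)⁻¹, conj_mem q e hp, ?_⟩
      rw [eval_cons, hw, htexp]
      have h1 : (if s then PresentedGroup.of true else (PresentedGroup.of true)⁻¹ : BS q)
          = bsT q ^ e := by cases s <;> simp [he, bsT]
      rw [h1]
      have h2 : (if (true : Bool) then (if s then (1:ℤ) else -1) else 0) = e := by
        cases s <;> simp [he]
      rw [h2, zpow_add]
      group



end BSaux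

/-- (Commutation) In `BS(1,q)` with `|q| > 1`, words of `t`-exponent sum zero
commute: `vw =_G wv`. -/
theorem bs_zero_tExp_commute (q : ℤ) (hq : 1 < |q|) (v w : List (Bool × Bool))
    (hv : tExp v = 0) (hw : tExp w = 0) :
    evalWord q (v ++ w) = evalWord q (w ++ v) := by
  obtain ⟨p, hp, hvp⟩ := BSaux.key q v
  obtain ⟨r, hr, hwr⟩ := BSaux.key q w
  rw [hv, zpow_zero, mul_one] at hvp
  rw [hw, zpow_zero, mul_one] at hwr
  have hmul : ∀ u u' : List (Bool × Bool),
      evalWord q (u ++ u') = evalWord q u * evalWord q u' := by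
    intro u u'
    simp [evalWord, ← FreeGroup.mul_mk]
  rw [hmul, hmul, hvp, hwr]
  exact BSaux.comm_closure q hp hr
end

section
/- Let n ≥ 1 and suppose m = 2^h s + Σ_{i=0}^{h-1} 2^i k_i where 0 ≤ h ≤ n, 2 ≤ |s| ≤ 3, |k_i| ≤ 1 for all i, and additionally 2h + |s| + Σ|k_i| ≤ 2n + 2. Then either m = ±2^{n+1} or m ≤ 2^n + 2^{n-1} + 2^{n-2}. -/
open Finset

private lemma bs12_aux_sum_le (h : ℕ) (k : ℕ → ℤ) (hk : ∀ i < h, |k i| ≤ 1) :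
    ∑ i ∈ Finset.range h, 2 ^ i * k i ≤ 2 ^ h - 1 := by
  calc ∑ i ∈ Finset.range h, 2 ^ i * k i ≤ ∑ i ∈ Finset.range h, 2 ^ i := by
        apply Finset.sum_le_sum
        intro i hi
        have h1 := hk i (Finset.mem_range.mp hi)
        have h2 : k i ≤ 1 := (abs_le.mp h1).2
        have h3 : (0:ℤ) < 2 ^ i := pow_pos (by norm_num) i
        nlinarith
    _ = 2 ^ h - 1 := by
        clear hk
        induction h with
        | zero => simp
        | succ n ih => rw [Finset.sum_range_succ, ih]; ring

private lemma bs12_aux_sum_le2 (h' : ℕ) (k : ℕ → ℤ) :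
    ∑ i ∈ Finset.range (h' + 1), 2 ^ i * k i ≤
      2 ^ h' * ∑ i ∈ Finset.range (h' + 1), |k i| := by
  rw [Finset.mul_sum]
  apply Finset.sum_le_sum
  intro i hi
  have hi' : i ≤ h' := Nat.lt_succ_iff.mp (Finset.mem_range.mp hi)
  have h1 : (2:ℤ) ^ i * k i ≤ 2 ^ i * |k i| := by
    have : (0:ℤ) < 2 ^ i := pow_pos (by norm_num) i
    nlinarith [le_abs_self (k i)]
  have h2 : (2:ℤ) ^ i * |k i| ≤ 2 ^ h' * |k i| := by
    apply mul_le_mul_of_nonneg_right _ (abs_nonneg _)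
    exact pow_le_pow_right₀ (by norm_num) hi'
  linarith

/-- Arithmetic core of the ball estimate for `BS(1,2)`: if
`m = 2^h s + Σ_{i<h} 2^i k_i` with `0 ≤ h ≤ n`, `2 ≤ |s| ≤ 3`, `|k_i| ≤ 1`, and
`2h + |s| + Σ_{i<h} |k_i| ≤ 2n + 2`, then `m = ±2^(n+1)` or
`m ≤ 2^n + 2^(n-1) + 2^(n-2)`. -/
theorem bs12_ball_bound (n h : ℕ) (hn : 1 ≤ n) (hh : h ≤ n) (s : ℤ) (k : ℕ → ℤ)
    (m : ℤ) (hs₁ : 2 ≤ |s|) (hs₂ : |s| ≤ 3) (hk : ∀ i < h, |k i| ≤ 1)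
    (hlen : 2 * (h : ℤ) + |s| + ∑ i ∈ Finset.range h, |k i| ≤ 2 * n + 2)
    (hm : m = 2 ^ h * s + ∑ i ∈ Finset.range h, 2 ^ i * k i) :
    m = 2 ^ (n + 1) ∨ m = -(2 ^ (n + 1)) ∨
      m ≤ 2 ^ n + 2 ^ (n - 1) + 2 ^ (n - 2) := by
  have hA : (0:ℤ) ≤ ∑ i ∈ Finset.range h, |k i| :=
    Finset.sum_nonneg fun i _ => abs_nonneg _
  have hS := bs12_aux_sum_le h k hk
  -- case n = 1
  rcases Nat.lt_or_ge n 2 with hn1 | hn2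
  · have hn1 : n = 1 := by omega
    subst hn1
    interval_cases h
    · simp only [Finset.range_zero, Finset.sum_empty, pow_zero, one_mul, add_zero] at hm
      right; right
      have : s ≤ 3 := le_trans (le_abs_self s) hs₂
      simp only [hm]
      norm_num
      omega
    · simp only [Finset.sum_range_one, pow_zero, pow_one, one_mul] at hm hlen hA
      have hk0 : |k 0| = 0 := by
        push_cast at hlen
        omega
      have hk0' : k 0 = 0 := abs_eq_zero.mp hk0
      have hs2 : |s| = 2 := by
        push_cast at hlen
        omega
      rcases (abs_eq (by norm_num : (0:ℤ) ≤ 2)).mp hs2 with h2 | h2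
      · left; rw [hm, h2, hk0']; norm_num
      · right; left; rw [hm, h2, hk0']; norm_num
  -- case n ≥ 2
  obtain ⟨n'', rfl⟩ : ∃ n'', n = n'' + 2 := ⟨n - 2, by omega⟩
  have hpow1 : (n'' + 2) - 1 = n'' + 1 := rfl
  have hpow2 : (n'' + 2) - 2 = n'' := rfl
  rw [hpow1, hpow2]
  have hB : (2:ℤ) ^ (n'' + 2) + 2 ^ (n'' + 1) + 2 ^ n'' = 7 * 2 ^ n'' := by ring
  rw [hB]
  have hPn : (0:ℤ) < 2 ^ n'' := pow_pos (by norm_num) n''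
  have hPh : (0:ℤ) < 2 ^ h := pow_pos (by norm_num) h
  rcases lt_or_ge s 0 with hneg | hpos
  · -- s negative
    right; right
    have hs : s ≤ -2 := by
      rcases abs_cases s with ⟨h1, _⟩ | ⟨h1, _⟩ <;> omega
    have : (2:ℤ) ^ h * s ≤ 2 ^ h * (-2) := by
      apply mul_le_mul_of_nonneg_left hs (le_of_lt hPh)
    nlinarith
  · have hs2 : 2 ≤ s := by rwa [abs_of_nonneg hpos] at hs₁
    have hs3 : s ≤ 3 := by rwa [abs_of_nonneg hpos] at hs₂
    rw [abs_of_nonneg hpos] at hlen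
    rcases (by omega : s = 2 ∨ s = 3) with rfl | rfl
    · -- s = 2
      rcases Nat.lt_or_ge h (n'' + 2) with hlt | hge
      · -- h < n
        right; right
        have hh' : h ≤ n'' + 1 := by omega
        have hph : (2:ℤ) ^ h ≤ 2 ^ (n'' + 1) := pow_le_pow_right₀ (by norm_num) hh'
        have : (2:ℤ) ^ (n'' + 1) = 2 * 2 ^ n'' := by ring
        nlinarith
      · -- h = n : m = 2^{n+1}
        have hhe : h = n'' + 2 := by omega
        subst hhe
        left
        have hA0 : ∑ i ∈ Finset.range (n'' + 2), |k i| = 0 := by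
          push_cast at hlen
          omega
        have hz : ∀ i ∈ Finset.range (n'' + 2), 2 ^ i * k i = 0 := by
          intro i hi
          have := (Finset.sum_eq_zero_iff_of_nonneg
            (fun j _ => abs_nonneg (k j))).mp hA0 i hi
          rw [abs_eq_zero.mp this, mul_zero]
        rw [hm, Finset.sum_eq_zero hz]
        ring
    · -- s = 3
      right; right
      have hhn : h ≤ n'' + 1 := by omega
      rcases Nat.lt_or_ge h (n'' + 1) with hlt | hge
      · -- h ≤ n''
        have hh' : h ≤ n'' := by omega
        have hph : (2:ℤ) ^ h ≤ 2 ^ n'' := pow_le_pow_right₀ (by norm_num) hh'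
        nlinarith
      · -- h = n'' + 1
        have hhe : h = n'' + 1 := by omega
        subst hhe
        have hA1 : ∑ i ∈ Finset.range (n'' + 1), |k i| ≤ 1 := by
          push_cast at hlen
          omega
        have hS2 := bs12_aux_sum_le2 n'' k
        have : ∑ i ∈ Finset.range (n'' + 1), 2 ^ i * k i ≤ 2 ^ n'' := by
          calc ∑ i ∈ Finset.range (n'' + 1), 2 ^ i * k i
              ≤ 2 ^ n'' * ∑ i ∈ Finset.range (n'' + 1), |k i| := hS2
            _ ≤ 2 ^ n'' * 1 := mul_le_mul_of_nonneg_left hA1 (le_of_lt hPn)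
            _ = 2 ^ n'' := mul_one _
        have hE : (2:ℤ) ^ (n'' + 1) = 2 * 2 ^ n'' := by ring
        nlinarith
end

section
/- Let q ≥ 7 and n ≥ 1, and suppose m = q^h s + Σ_{i=0}^{h-1} q^i k_i where 0 ≤ h ≤ n, 1 ≤ |s| ≤ q−1, |k_i| ≤ ⌊q/2⌋ for all i, and 2h + |s| + Σ|k_i| ≤ 2n + 1. Then either m = ±q^n or m ≤ 3 q^{n-1}. -/
/-- `2(d+1)+1 ≤ 3 q^d` for `q ≥ 7`. -/
lemma bs1q_aux (q : ℤ) (hq : 7 ≤ q) : ∀ d : ℕ, (2 * (d + 1) + 1 : ℤ) ≤ 3 * q ^ d := by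
  intro d
  induction d with
  | zero => norm_num
  | succ d ih =>
    have hp : (0:ℤ) < q ^ d := by positivity
    have : (2 * ((d:ℤ) + 1 + 1) + 1) = (2 * (d + 1) + 1) + 2 := by ring
    push_cast [pow_succ] at *
    nlinarith [ih, hp]

/-- Arithmetic core of the ball estimate for `BS(1,q)`, `q ≥ 7`: if
`m = q^h s + Σ_{i<h} q^i k_i` with `0 ≤ h ≤ n`, `1 ≤ |s| ≤ q-1`,
`|k_i| ≤ ⌊q/2⌋`, and `2h + |s| + Σ_{i<h} |k_i| ≤ 2n + 1`, then `m = ±q^n` or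
`m ≤ 3 q^(n-1)`. -/
theorem bs1q_ball_bound (q : ℤ) (hq : 7 ≤ q) (n h : ℕ) (hn : 1 ≤ n) (hh : h ≤ n)
    (s : ℤ) (k : ℕ → ℤ) (m : ℤ) (hs₁ : 1 ≤ |s|) (hs₂ : |s| ≤ q - 1)
    (hk : ∀ i < h, |k i| ≤ q / 2)
    (hlen : 2 * (h : ℤ) + |s| + ∑ i ∈ Finset.range h, |k i| ≤ 2 * n + 1)
    (hm : m = q ^ h * s + ∑ i ∈ Finset.range h, q ^ i * k i) :
    m = q ^ n ∨ m = -(q ^ n) ∨ m ≤ 3 * q ^ (n - 1) := by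
  have hq0 : (0:ℤ) < q := by linarith
  have hq1 : (1:ℤ) ≤ q := by linarith
  have hS : 0 ≤ ∑ i ∈ Finset.range h, |k i| := Finset.sum_nonneg fun i _ => abs_nonneg _
  rcases eq_or_lt_of_le hh with rfl | hlt
  · -- h = n : forces s = ±1 and all k i = 0
    have h1 : |s| + ∑ i ∈ Finset.range h, |k i| ≤ 1 := by linarith
    have hsabs : |s| = 1 := le_antisymm (by linarith) hs₁
    have hSum0abs : ∑ i ∈ Finset.range h, |k i| = 0 := le_antisymm (by linarith) hS
    have hki : ∀ i ∈ Finset.range h, |k i| = 0 :=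
      (Finset.sum_eq_zero_iff_of_nonneg fun i _ => abs_nonneg _).mp hSum0abs
    have hsum0 : ∑ i ∈ Finset.range h, q ^ i * k i = 0 :=
      Finset.sum_eq_zero fun i hi => by
        have := abs_eq_zero.mp (hki i hi)
        simp [this]
    rcases (abs_eq (by norm_num : (0:ℤ) ≤ 1)).mp hsabs with h1' | h1'
    · left; rw [hm, hsum0, h1']; ring
    · right; left; rw [hm, hsum0, h1']; ring
  · right; right
    -- h < n : bound m ≤ 3 q^(n-1)
    set S := ∑ i ∈ Finset.range h, |k i| with hSdef
    have habs1 : m ≤ q ^ h * |s| + ∑ i ∈ Finset.range h, q ^ i * |k i| := by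
      rw [hm]
      calc q ^ h * s + ∑ i ∈ Finset.range h, q ^ i * k i
          ≤ |q ^ h * s + ∑ i ∈ Finset.range h, q ^ i * k i| := le_abs_self _
        _ ≤ |q ^ h * s| + |∑ i ∈ Finset.range h, q ^ i * k i| := abs_add_le _ _
        _ ≤ |q ^ h * s| + ∑ i ∈ Finset.range h, |q ^ i * k i| := by
            gcongr
            exact Finset.abs_sum_le_sum_abs _ _
        _ = q ^ h * |s| + ∑ i ∈ Finset.range h, q ^ i * |k i| := by
            rw [abs_mul, abs_pow, abs_of_pos hq0]
            congr 1
            refine Finset.sum_congr rfl fun i _ => ?_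
            rw [abs_mul, abs_pow, abs_of_pos hq0]
    have hterm : ∑ i ∈ Finset.range h, q ^ i * |k i| ≤ q ^ (h - 1) * S := by
      rw [hSdef, Finset.mul_sum]
      refine Finset.sum_le_sum fun i hi => ?_
      have hi' : i ≤ h - 1 := by
        have := Finset.mem_range.mp hi; omega
      exact mul_le_mul_of_nonneg_right (pow_le_pow_right₀ hq1 hi') (abs_nonneg _)
    have hqh : q ^ (h - 1) ≤ q ^ h := pow_le_pow_right₀ hq1 (Nat.sub_le _ _)
    have habs2 : m ≤ q ^ h * (|s| + S) := by
      have : q ^ (h - 1) * S ≤ q ^ h * S := mul_le_mul_of_nonneg_right hqh hS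
      nlinarith [habs1, hterm]
    -- length bound: |s| + S ≤ 2*(n-h)+1
    have hd : 1 ≤ n - h := by omega
    have hcast : ((n - h : ℕ) : ℤ) = (n : ℤ) - h := by
      push_cast [Nat.cast_sub hh]; ring
    have hL : |s| + S ≤ 2 * ((n - h : ℕ) : ℤ) + 1 := by
      rw [hcast]; linarith
    have hkey : (2 * ((n - h : ℕ) : ℤ) + 1) ≤ 3 * q ^ (n - h - 1) := by
      have := bs1q_aux q hq (n - h - 1)
      have heq : ((n - h - 1 : ℕ) : ℤ) + 1 = ((n - h : ℕ) : ℤ) := by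
        push_cast [Nat.cast_sub hd]; ring
      rw [← heq]; exact this
    have hpowh : (0:ℤ) < q ^ h := by positivity
    have hfin : q ^ h * (|s| + S) ≤ q ^ h * (3 * q ^ (n - h - 1)) := by
      apply mul_le_mul_of_nonneg_left (le_trans hL hkey) (le_of_lt hpowh)
    have hexp : h + (n - h - 1) = n - 1 := by omega
    calc m ≤ q ^ h * (|s| + S) := habs2
      _ ≤ q ^ h * (3 * q ^ (n - h - 1)) := hfin
      _ = 3 * q ^ (n - 1) := by rw [← hexp, pow_add]; ring
end
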